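/- arXiv:2506.14123 — 2 statements merged into one kernel-verified Lean document; each statement's English description precedes it below -/
import Mathlib

section
/- Let S₁ and S₂ be byte strings and set T₁ = encode(S₁) and T₂ = encode(S₂). Then the concatenation T₁ ⧺ T₂ is a valid token sequence if and only if no merge applied during the run of encode on S₁ ⧺ S₂ crosses position |S₁|. -/
/-!
Formalization of a BPE tokenizer with an ordered merge list.

* `σ` is the (finite) byte alphabet, `τ` is the (finite) vocabulary of tokens.
* `base` embeds each byte as a distinct base token.
* `dec` decodes a single token to a byte string; it is extended to token
  sequences by concatenation (`decodeSeq`).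
* `merges` is the ordered merge list; each merge `(l, r, n)` replaces an
  adjacent pair `(l, r)` by the single token `n`, and satisfies
  `dec n = dec l ++ dec r`.
* `encode` turns a byte string into its base tokens and then, processing the
  merges in order, repeatedly replaces the leftmost adjacent occurrence of
  `(l, r)` by `n` until no occurrence remains, before moving to the next merge.
-/

structure BPE (σ τ : Type*) where
  base : σ → τ
  dec : τ → List σ
  merges : List (τ × τ × τ)
  base_inj : Function.Injective base
  dec_base : ∀ b, dec (base b) = [b]
  dec_merge : ∀ m ∈ merges, dec m.2.2 = dec m.1 ++ dec m.2.1

namespace BPE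

variable {σ τ : Type*} [DecidableEq τ]

/-- Decode a token sequence by concatenating the decodings of its tokens. -/
def decodeSeq (B : BPE σ τ) (T : List τ) : List σ := (T.map B.dec).flatten

/-- Replace the leftmost adjacent occurrence of `(l, r)` by `n`, if any,
also returning the starting byte position of the replaced pair. -/
def replaceLeftmost (B : BPE σ τ) (l r n : τ) : List τ → Option (ℕ × List τ)
  | [] => none
  | [_] => none
  | t :: u :: rest =>
      if t = l ∧ u = r then some (0, n :: rest)
      else (B.replaceLeftmost l r n (u :: rest)).map
        (fun p => (p.1 + (B.dec t).length, t :: p.2))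

/-- Repeatedly replace the leftmost adjacent occurrence of `(l, r)` by `n`
until no occurrence remains (the fuel, taken to be the length of the list,
suffices since every replacement shortens the list).  Also returns the list
of byte positions at which replacements were performed, in order. -/
def runMerge (B : BPE σ τ) (l r n : τ) : ℕ → List τ → List τ × List ℕ
  | 0, T => (T, [])
  | fuel + 1, T =>
    match B.replaceLeftmost l r n T with
    | none => (T, [])
    | some (p, T') =>
      let q := B.runMerge l r n fuel T'
      (q.1, p :: q.2)

/-- Process an (indexed) list of merges in order, starting from token sequence
`T`; returns the final token sequence together with the ordered list of merge
applications performed, each recorded as a pair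
(index of the merge in the merge list, starting byte position). -/
def encodeRunAux (B : BPE σ τ) : List (ℕ × τ × τ × τ) → List τ → List τ × List (ℕ × ℕ)
  | [], T => (T, [])
  | (i, l, r, n) :: ms, T =>
    let q := B.runMerge l r n T.length T
    let q' := B.encodeRunAux ms q.1
    (q'.1, q.2.map (fun p => (i, p)) ++ q'.2)

/-- The full run of the BPE encoder on a byte string `S`: the final token
sequence together with the ordered list of merge applications performed. -/
def encodeRun (B : BPE σ τ) (S : List σ) : List τ × List (ℕ × ℕ) :=
  B.encodeRunAux (B.merges.zipIdx.map Prod.swap) (S.map B.base)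

/-- BPE encoding of a byte string. -/
def encode (B : BPE σ τ) (S : List σ) : List τ := (B.encodeRun S).1

/-- The ordered list of merge applications (merge index, starting byte
position) performed during the run of `encode` on `S`. -/
def encodeApps (B : BPE σ τ) (S : List σ) : List (ℕ × ℕ) := (B.encodeRun S).2

/-- A token sequence is *valid* if it is the canonical encoding of the byte
string it decodes to. -/
def Valid (B : BPE σ τ) (T : List τ) : Prop := B.encode (B.decodeSeq T) = T

/-- The merge list is in *normal form*:
(i) each token is produced by at most one merge;
(ii) every token `t` satisfies `encode (dec t) = [t]`;
(iii) every merge occurs later in the merge list than the merges producing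
each of its two input tokens. -/
def NormalForm (B : BPE σ τ) : Prop :=
  (∀ i j (hi : i < B.merges.length) (hj : j < B.merges.length),
      (B.merges[i]'hi).2.2 = (B.merges[j]'hj).2.2 → i = j) ∧
  (∀ t : τ, B.encode (B.dec t) = [t]) ∧
  (∀ i j (hi : i < B.merges.length) (hj : j < B.merges.length),
      (B.merges[i]'hi).2.2 = (B.merges[j]'hj).1 ∨
        (B.merges[i]'hi).2.2 = (B.merges[j]'hj).2.1 → i < j)

/-- The merge application `app = (t, p)` *crosses* byte position `c` if the
token it creates (the output of merge `t`, starting at byte position `p`)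
has a byte span properly containing `c`. -/
def AppCrosses (B : BPE σ τ) (app : ℕ × ℕ) (c : ℕ) : Prop :=
  ∃ h : app.1 < B.merges.length,
    app.2 < c ∧ c < app.2 + (B.dec (B.merges[app.1]'h).2.2).length

/-- Some merge applied during the run of `encode` on `S` crosses position `c`. -/
def MergeCrossesInRun (B : BPE σ τ) (S : List σ) (c : ℕ) : Prop :=
  ∃ app ∈ B.encodeApps S, B.AppCrosses app c

/-- The token sequence `U` contains a token whose byte span properly
contains position `c`. -/
def TokenCrosses (B : BPE σ τ) (U : List τ) (c : ℕ) : Prop :=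
  ∃ k, k < U.length ∧
    (B.decodeSeq (U.take k)).length < c ∧ c < (B.decodeSeq (U.take (k + 1))).length

end BPE
namespace BPE

variable {σ τ : Type*} [DecidableEq τ]

/-- The *Valid Covering Tree* of a byte string `P`: the set of all nonempty
token sequences `T = [t₁, …, tₙ]` such that (1) `P` is a prefix of
`decode T`, (2) `decode [t₁, …, t_{n-1}]` is a prefix of `P`, and
(3) `T` is valid. -/
def VCT (B : BPE σ τ) (P : List σ) : Set (List τ) :=
  {T | T ≠ [] ∧ P <+: B.decodeSeq T ∧ B.decodeSeq T.dropLast <+: P ∧ B.Valid T}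

/-- The maximal prefix of a token sequence whose total decoded length is at
most `k`, i.e. the tokens whose byte spans end at or before position `k`
(together with their spans, which are determined by the preceding tokens). -/
def spanPrefix (B : BPE σ τ) (k : ℕ) : List τ → List τ
  | [] => []
  | t :: T =>
      if (B.dec t).length ≤ k then t :: B.spanPrefix (k - (B.dec t).length) T
      else []

/-- `L₀` is a *lookahead bound* for the tokenizer if whenever two byte strings
agree on their first `k + L₀` bytes, the tokens of their encodings whose byte
spans end at or before position `k` coincide (with identical spans). -/
def LookaheadBound (B : BPE σ τ) (L₀ : ℕ) : Prop :=
  ∀ (x x' : List σ) (k : ℕ), x.take (k + L₀) = x'.take (k + L₀) →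
    B.spanPrefix k (B.encode x) = B.spanPrefix k (B.encode x')

/-- `U'` is the minimal covering prefix of `U` with respect to `P`: the
shortest prefix of `U` whose decoding has `P` as a prefix. -/
def IsMinCover (B : BPE σ τ) (P : List σ) (U U' : List τ) : Prop :=
  U' <+: U ∧ P <+: B.decodeSeq U' ∧
    ∀ U'' : List τ, U'' <+: U → P <+: B.decodeSeq U'' → U'.length ≤ U''.length

/-- The pair `(l, r)` occurs adjacently in `T`. -/
def PairAdj (l r : τ) (T : List τ) : Prop := ∃ A C, T = A ++ l :: r :: C

/-- The merge application `a = (t, i)` (merge index `t`, starting byte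
position `i` of the left token) is applicable to the token sequence `T`. -/
def Applicable (B : BPE σ τ) (a : ℕ × ℕ) (T : List τ) : Prop :=
  ∃ h : a.1 < B.merges.length, ∃ A C : List τ,
    T = A ++ (B.merges[a.1]'h).1 :: (B.merges[a.1]'h).2.1 :: C ∧
      (B.decodeSeq A).length = a.2

/-- `T'` is obtained from `T` by performing the merge application `a = (t, i)`:
the input pair of merge `t`, occurring adjacently in `T` with the left token
starting at byte position `i`, is replaced by the output token of merge `t`. -/
def ApplyApp (B : BPE σ τ) (a : ℕ × ℕ) (T T' : List τ) : Prop :=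
  ∃ h : a.1 < B.merges.length, ∃ A C : List τ,
    T = A ++ (B.merges[a.1]'h).1 :: (B.merges[a.1]'h).2.1 :: C ∧
      (B.decodeSeq A).length = a.2 ∧
      T' = A ++ (B.merges[a.1]'h).2.2 :: C

/-- Lexicographic order on merge applications `(t, i)`. -/
def appLE (a a' : ℕ × ℕ) : Prop :=
  a.1 < a'.1 ∨ (a.1 = a'.1 ∧ a.2 ≤ a'.2)

/-- `GreedyChain B T₀ apps T` holds when the sequence of merge applications
`apps` leads from token sequence `T₀` to token sequence `T`, and each applied
application is lexicographically least among those applicable to the current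
token sequence. -/
inductive GreedyChain (B : BPE σ τ) : List τ → List (ℕ × ℕ) → List τ → Prop
  | nil (T : List τ) : GreedyChain B T [] T
  | cons {T T' Tf : List τ} {a : ℕ × ℕ} {apps : List (ℕ × ℕ)} :
      B.ApplyApp a T T' →
      (∀ a', B.Applicable a' T → appLE a a') →
      GreedyChain B T' apps Tf →
      GreedyChain B T (a :: apps) Tf

end BPE

/-!
Every run of the encoder is a chain of merge applications, and a merge application only
removes a token boundary. So if `encode (S₁ ++ S₂) = encode S₁ ++ encode S₂`, the position
`|S₁|` is a boundary of the final token sequence, hence of every intermediate one, and no merge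
crosses it. Conversely, if no merge crosses `|S₁|`, then no pair `(l, r)` is ever merged across
the junction (tokens decode to nonempty strings, so such a merge would cross it); each merge pass
then acts on the two halves independently, and the run on `S₁ ++ S₂` is the concatenation of
the runs on `S₁` and on `S₂`.
-/

namespace BPE

variable {σ τ : Type*} (B : BPE σ τ)

@[simp] lemma decodeSeq_nil : B.decodeSeq [] = [] := rfl

@[simp] lemma decodeSeq_cons (t : τ) (T : List τ) :
    B.decodeSeq (t :: T) = B.dec t ++ B.decodeSeq T := by
  simp [decodeSeq]

@[simp] lemma decodeSeq_append (T U : List τ) :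
    B.decodeSeq (T ++ U) = B.decodeSeq T ++ B.decodeSeq U := by
  simp [decodeSeq]

lemma decodeSeq_map_base (S : List σ) : B.decodeSeq (S.map B.base) = S := by
  induction S with
  | nil => rfl
  | cons b S ih => simp [B.dec_base, ih]

lemma dec_ne_nil_of_mem_map_base (S : List σ) : ∀ t ∈ S.map B.base, B.dec t ≠ [] := by
  simp [B.dec_base]

lemma dec_ne_nil_of_merge {l r n : τ} (hn : B.dec n = B.dec l ++ B.dec r) {A C : List τ}
    (hne : ∀ t ∈ A ++ l :: r :: C, B.dec t ≠ []) : ∀ t ∈ A ++ n :: C, B.dec t ≠ [] := by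
  simp only [List.mem_append, List.mem_cons] at hne ⊢
  rintro t (ht | rfl | ht)
  · exact hne t (Or.inl ht)
  · simp [hn, hne l (by simp)]
  · exact hne t (by simp [ht])

inductive ApplyApps : List (ℕ × ℕ) → List τ → List τ → Prop
  | nil (T : List τ) : ApplyApps [] T T
  | cons {a : ℕ × ℕ} {apps : List (ℕ × ℕ)} {T T' U : List τ} :
      B.ApplyApp a T T' → ApplyApps apps T' U → ApplyApps (a :: apps) T U

variable {B}

lemma ApplyApps.append {apps apps' : List (ℕ × ℕ)} {T U V : List τ}
    (h : B.ApplyApps apps T U) (h' : B.ApplyApps apps' U V) :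
    B.ApplyApps (apps ++ apps') T V := by
  induction h with
  | nil => exact h'
  | cons hstep _ ih => exact .cons hstep (ih h')

lemma ApplyApps.decodeSeq_eq {apps : List (ℕ × ℕ)} {T U : List τ} (h : B.ApplyApps apps T U) :
    B.decodeSeq U = B.decodeSeq T := by
  induction h with
  | nil => rfl
  | cons hstep _ ih =>
    obtain ⟨hi, A, C, rfl, -, rfl⟩ := hstep
    simp [ih, B.dec_merge _ (List.getElem_mem hi)]

lemma ApplyApps.dec_ne_nil {apps : List (ℕ × ℕ)} {T U : List τ} (h : B.ApplyApps apps T U)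
    (hne : ∀ t ∈ T, B.dec t ≠ []) : ∀ t ∈ U, B.dec t ≠ [] := by
  induction h with
  | nil => exact hne
  | cons hstep _ ih =>
    obtain ⟨hi, A, C, rfl, -, rfl⟩ := hstep
    exact ih (B.dec_ne_nil_of_merge (B.dec_merge _ (List.getElem_mem hi)) hne)

variable (B)

def SplitsAt (U : List τ) (c : ℕ) : Prop :=
  ∃ U₁ U₂, U = U₁ ++ U₂ ∧ (B.decodeSeq U₁).length = c

variable {B}

lemma splitsAt_of_merge {l r n : τ} (hn : B.dec n = B.dec l ++ B.dec r) {A C : List τ} {c : ℕ}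
    (hsplit : B.SplitsAt (A ++ n :: C) c) :
    B.SplitsAt (A ++ l :: r :: C) c ∧
      (c ≤ (B.decodeSeq A).length ∨ (B.decodeSeq A).length + (B.dec n).length ≤ c) := by
  obtain ⟨U₁, U₂, hU, rfl⟩ := hsplit
  rcases List.append_eq_append_iff.1 hU with ⟨_ | ⟨t, X⟩, rfl, hX⟩ | ⟨X, rfl, rfl⟩
  · simp only [List.append_nil]
    exact ⟨⟨A, _, rfl, rfl⟩, Or.inl le_rfl⟩
  · obtain ⟨rfl, rfl⟩ := List.cons_eq_cons.1 hX
    refine ⟨⟨A ++ l :: r :: X, U₂, by simp, ?_⟩, Or.inr ?_⟩ <;> simp [hn]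
  · exact ⟨⟨U₁, X ++ l :: r :: C, by simp, rfl⟩, Or.inl (by simp)⟩

lemma ApplyApp.splitsAt {a : ℕ × ℕ} {T T' : List τ} {c : ℕ} (h : B.ApplyApp a T T')
    (hsplit : B.SplitsAt T' c) : B.SplitsAt T c ∧ ¬B.AppCrosses a c := by
  obtain ⟨hi, A, C, rfl, hA, rfl⟩ := h
  obtain ⟨hT, hc⟩ := B.splitsAt_of_merge (B.dec_merge _ (List.getElem_mem hi)) hsplit
  exact ⟨hT, fun ⟨_, hlt, hgt⟩ => by omega⟩

lemma ApplyApps.splitsAt {apps : List (ℕ × ℕ)} {T U : List τ} {c : ℕ}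
    (h : B.ApplyApps apps T U) (hsplit : B.SplitsAt U c) :
    B.SplitsAt T c ∧ ∀ a ∈ apps, ¬B.AppCrosses a c := by
  induction h with
  | nil => exact ⟨hsplit, by simp⟩
  | cons hstep _ ih =>
    obtain ⟨hT', happs⟩ := ih hsplit
    obtain ⟨hT, ha⟩ := hstep.splitsAt hT'
    exact ⟨hT, by simpa [ha] using happs⟩

variable (B)

lemma getElem_merges_of_mem_zipIdx {x : ℕ × τ × τ × τ}
    (hx : x ∈ B.merges.zipIdx.map Prod.swap) :
    ∃ h : x.1 < B.merges.length, B.merges[x.1] = x.2 := by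
  obtain ⟨⟨m, i⟩, hmem, rfl⟩ := List.mem_map.1 hx
  obtain ⟨hi, hm⟩ := List.getElem?_eq_some_iff.1 (List.mem_zipIdx_iff_getElem?.1 hmem)
  exact ⟨hi, hm⟩

section encode

variable [DecidableEq τ] {l r n : τ}

lemma replaceLeftmost_cons (t : τ) (T : List τ) :
    B.replaceLeftmost l r n (t :: T) =
      if t = l ∧ T.head? = some r then some (0, n :: T.tail)
      else (B.replaceLeftmost l r n T).map (fun q => (q.1 + (B.dec t).length, t :: q.2)) := by
  cases T <;> simp [replaceLeftmost]

lemma exists_eq_of_replaceLeftmost_eq_some {T T' : List τ} {p : ℕ}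
    (h : B.replaceLeftmost l r n T = some (p, T')) :
    ∃ A C, T = A ++ l :: r :: C ∧ T' = A ++ n :: C ∧ (B.decodeSeq A).length = p := by
  induction T generalizing p T' with
  | nil => simp [replaceLeftmost] at h
  | cons t T ih =>
    rw [replaceLeftmost_cons] at h
    split_ifs at h with hc
    · obtain ⟨rfl, hr⟩ := hc
      obtain ⟨C, rfl⟩ := List.head?_eq_some_iff.1 hr
      simp only [Option.some.injEq, Prod.mk.injEq] at h
      obtain ⟨rfl, rfl⟩ := h
      exact ⟨[], C, by simp⟩
    · obtain ⟨⟨q, U⟩, hq, he⟩ := Option.map_eq_some_iff.1 h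
      simp only [Prod.mk.injEq] at he
      obtain ⟨rfl, rfl⟩ := he
      obtain ⟨A, C, rfl, rfl, rfl⟩ := ih hq
      exact ⟨t :: A, C, rfl, rfl, by simp [Nat.add_comm]⟩

lemma ne_nil_of_replaceLeftmost_eq_some {T T' : List τ} {p : ℕ}
    (h : B.replaceLeftmost l r n T = some (p, T')) : T ≠ [] := by
  rintro rfl
  simp [replaceLeftmost] at h

lemma replaceLeftmost_append_of_eq_some {T₁ T₁' : List τ} {p : ℕ} (T₂ : List τ)
    (h : B.replaceLeftmost l r n T₁ = some (p, T₁')) :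
    B.replaceLeftmost l r n (T₁ ++ T₂) = some (p, T₁' ++ T₂) := by
  induction T₁ generalizing p T₁' with
  | nil => simp [replaceLeftmost] at h
  | cons t T₁ ih =>
    rw [replaceLeftmost_cons] at h
    rw [List.cons_append, replaceLeftmost_cons]
    split_ifs at h with hc
    · obtain ⟨rfl, hr⟩ := hc
      obtain ⟨C, rfl⟩ := List.head?_eq_some_iff.1 hr
      simp only [Option.some.injEq, Prod.mk.injEq] at h
      obtain ⟨rfl, rfl⟩ := h
      simp
    · obtain ⟨⟨q, U⟩, hq, he⟩ := Option.map_eq_some_iff.1 h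
      simp only [Prod.mk.injEq] at he
      obtain ⟨rfl, rfl⟩ := he
      rw [List.head?_append_of_ne_nil _ (B.ne_nil_of_replaceLeftmost_eq_some hq), if_neg hc,
        ih hq]
      simp

lemma replaceLeftmost_append_of_eq_none {T₁ : List τ} (T₂ : List τ)
    (h : B.replaceLeftmost l r n T₁ = none) :
    (∃ A C, T₁ = A ++ [l] ∧ T₂ = r :: C ∧
        B.replaceLeftmost l r n (T₁ ++ T₂) = some ((B.decodeSeq A).length, A ++ n :: C)) ∨
      B.replaceLeftmost l r n (T₁ ++ T₂) =
        (B.replaceLeftmost l r n T₂).map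
          (fun q => (q.1 + (B.decodeSeq T₁).length, T₁ ++ q.2)) := by
  induction T₁ with
  | nil => exact Or.inr (by simp)
  | cons t T₁ ih =>
    rw [replaceLeftmost_cons] at h
    split_ifs at h with hc
    have h₁ : B.replaceLeftmost l r n T₁ = none := Option.map_eq_none_iff.1 h
    rw [List.cons_append, replaceLeftmost_cons]
    obtain rfl | hT₁ := eq_or_ne T₁ []
    · split_ifs with hc'
      · obtain ⟨rfl, hr⟩ := hc'
        obtain ⟨C, rfl⟩ := List.head?_eq_some_iff.1 (by simpa using hr)
        exact Or.inl ⟨[], C, rfl, rfl, by simp⟩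
      · exact Or.inr (by simp)
    · rw [List.head?_append_of_ne_nil _ hT₁, if_neg hc]
      rcases ih h₁ with ⟨A, C, rfl, rfl, hA⟩ | hmap
      · exact Or.inl ⟨t :: A, C, rfl, rfl, by simp_all [Nat.add_comm]⟩
      · right
        rw [hmap]
        cases B.replaceLeftmost l r n T₂ <;> simp [Nat.add_comm, Nat.add_assoc]

lemma runMerge_of_replaceLeftmost_eq_none {T : List τ}
    (h : B.replaceLeftmost l r n T = none) (f : ℕ) : B.runMerge l r n f T = (T, []) := by
  cases f <;> simp [runMerge, h]

lemma runMerge_length_of_replaceLeftmost_eq_some {T T' : List τ} {p : ℕ}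
    (h : B.replaceLeftmost l r n T = some (p, T')) :
    B.runMerge l r n T.length T =
      ((B.runMerge l r n T'.length T').1, p :: (B.runMerge l r n T'.length T').2) := by
  obtain ⟨A, C, rfl, rfl, -⟩ := B.exists_eq_of_replaceLeftmost_eq_some h
  simp [runMerge, h]

theorem runMerge_append (hn : B.dec n = B.dec l ++ B.dec r) (T₁ T₂ : List τ)
    (hne : ∀ t ∈ T₁ ++ T₂, B.dec t ≠ [])
    (hcross : ∀ p ∈ (B.runMerge l r n (T₁ ++ T₂).length (T₁ ++ T₂)).2,
      ¬(p < (B.decodeSeq T₁).length ∧ (B.decodeSeq T₁).length < p + (B.dec n).length)) :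
    (B.runMerge l r n (T₁ ++ T₂).length (T₁ ++ T₂)).1 =
      (B.runMerge l r n T₁.length T₁).1 ++ (B.runMerge l r n T₂.length T₂).1 := by
  cases h₁ : B.replaceLeftmost l r n T₁ with
  | some q =>
    obtain ⟨p, T₁'⟩ := q
    have h := B.replaceLeftmost_append_of_eq_some T₂ h₁
    obtain ⟨A, C, hT₁, rfl, -⟩ := B.exists_eq_of_replaceLeftmost_eq_some h₁
    subst hT₁
    rw [B.runMerge_length_of_replaceLeftmost_eq_some h] at hcross ⊢
    rw [B.runMerge_length_of_replaceLeftmost_eq_some h₁]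
    refine runMerge_append hn _ T₂ ?_ fun p' hp' => ?_
    · simpa using B.dec_ne_nil_of_merge hn (C := C ++ T₂) (by simpa using hne)
    · simpa [hn] using hcross p' (List.mem_cons_of_mem _ hp')
  | none =>
    rcases B.replaceLeftmost_append_of_eq_none T₂ h₁ with ⟨A, C, rfl, rfl, h⟩ | h
    · -- the merge at the junction would cross `|decode T₁|`
      rw [B.runMerge_length_of_replaceLeftmost_eq_some h] at hcross
      have hl := hne l (by simp)
      have hr := hne r (by simp)
      refine absurd (hcross _ List.mem_cons_self) ?_
      simp [hn, List.length_pos_iff, hl, hr]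
    · cases h₂ : B.replaceLeftmost l r n T₂ with
      | none =>
        rw [h₂, Option.map_none] at h
        simp [B.runMerge_of_replaceLeftmost_eq_none, h, h₁, h₂]
      | some q =>
        obtain ⟨p, T₂'⟩ := q
        rw [h₂, Option.map_some] at h
        rw [B.runMerge_length_of_replaceLeftmost_eq_some h] at hcross ⊢
        rw [B.runMerge_length_of_replaceLeftmost_eq_some h₂]
        obtain ⟨A, C, hT₂, rfl, -⟩ := B.exists_eq_of_replaceLeftmost_eq_some h₂
        subst hT₂
        refine runMerge_append hn T₁ _ ?_ fun p' hp' => hcross p' (List.mem_cons_of_mem _ hp')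
        simpa using B.dec_ne_nil_of_merge hn (A := T₁ ++ A) (by simpa using hne)
termination_by T₁.length + T₂.length
decreasing_by all_goals subst_vars; simp

lemma applyApps_runMerge {i : ℕ} (hi : i < B.merges.length) {l r n : τ}
    (hm : B.merges[i] = (l, r, n)) (f : ℕ) (T : List τ) :
    B.ApplyApps ((B.runMerge l r n f T).2.map (i, ·)) T (B.runMerge l r n f T).1 := by
  induction f generalizing T with
  | zero => exact .nil T
  | succ f ih =>
    cases h : B.replaceLeftmost l r n T with
    | none => simpa [runMerge, h] using .nil T
    | some q =>
      obtain ⟨p, T'⟩ := q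
      obtain ⟨A, C, rfl, rfl, hA⟩ := B.exists_eq_of_replaceLeftmost_eq_some h
      simp only [runMerge, h, List.map_cons]
      exact .cons ⟨hi, A, C, by simp [hm], hA, by simp [hm]⟩ (ih _)

lemma applyApps_encodeRunAux {ms : List (ℕ × τ × τ × τ)}
    (hms : ∀ x ∈ ms, ∃ h : x.1 < B.merges.length, B.merges[x.1] = x.2) (T : List τ) :
    B.ApplyApps (B.encodeRunAux ms T).2 T (B.encodeRunAux ms T).1 := by
  induction ms generalizing T with
  | nil => exact .nil T
  | cons x ms ih =>
    obtain ⟨i, l, r, n⟩ := x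
    obtain ⟨hi, hm⟩ := hms _ List.mem_cons_self
    exact (B.applyApps_runMerge hi hm _ T).append
      (ih (fun x hx => hms x (List.mem_cons_of_mem _ hx)) _)

lemma applyApps_encode (S : List σ) : B.ApplyApps (B.encodeApps S) (S.map B.base) (B.encode S) :=
  B.applyApps_encodeRunAux (fun _ => B.getElem_merges_of_mem_zipIdx) _

lemma decodeSeq_encode_s1 (S : List σ) : B.decodeSeq (B.encode S) = S :=
  (B.applyApps_encode S).decodeSeq_eq.trans (B.decodeSeq_map_base S)

theorem encodeRunAux_append {ms : List (ℕ × τ × τ × τ)}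
    (hms : ∀ x ∈ ms, ∃ h : x.1 < B.merges.length, B.merges[x.1] = x.2) (T₁ T₂ : List τ)
    (hne : ∀ t ∈ T₁ ++ T₂, B.dec t ≠ [])
    (hcross : ∀ a ∈ (B.encodeRunAux ms (T₁ ++ T₂)).2,
      ¬B.AppCrosses a (B.decodeSeq T₁).length) :
    (B.encodeRunAux ms (T₁ ++ T₂)).1 =
      (B.encodeRunAux ms T₁).1 ++ (B.encodeRunAux ms T₂).1 := by
  induction ms generalizing T₁ T₂ with
  | nil => rfl
  | cons x ms ih =>
    obtain ⟨i, l, r, n⟩ := x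
    obtain ⟨hi, hm⟩ := hms _ List.mem_cons_self
    have hn : B.dec n = B.dec l ++ B.dec r := by
      simpa [hm] using B.dec_merge _ (List.getElem_mem hi)
    simp only [encodeRunAux, List.mem_append, List.mem_map] at hcross ⊢
    have hrun := B.applyApps_runMerge hi hm (T₁ ++ T₂).length (T₁ ++ T₂)
    have hsplit := B.runMerge_append hn T₁ T₂ hne fun p hp hc =>
      hcross (i, p) (Or.inl ⟨p, hp, rfl⟩) ⟨hi, by simpa [hm] using hc⟩
    rw [hsplit] at hcross hrun ⊢
    refine ih (fun x hx => hms x (List.mem_cons_of_mem _ hx)) _ _ (hrun.dec_ne_nil hne)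
      fun a ha => ?_
    rw [(B.applyApps_runMerge hi hm _ T₁).decodeSeq_eq]
    exact hcross a (Or.inr ha)

theorem encode_append_eq_iff (S₁ S₂ : List σ) :
    B.encode (S₁ ++ S₂) = B.encode S₁ ++ B.encode S₂ ↔
      ¬B.MergeCrossesInRun (S₁ ++ S₂) S₁.length := by
  constructor
  · rintro h ⟨a, ha, hc⟩
    have hsplit : B.SplitsAt (B.encode (S₁ ++ S₂)) S₁.length :=
      ⟨_, _, h, by rw [decodeSeq_encode_s1]⟩
    exact ((B.applyApps_encode _).splitsAt hsplit).2 a ha hc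
  · intro h
    have hne := B.dec_ne_nil_of_mem_map_base (S₁ ++ S₂)
    simp only [encode, encodeRun, List.map_append] at hne ⊢
    refine B.encodeRunAux_append (fun _ => B.getElem_merges_of_mem_zipIdx) _ _ hne
      fun a ha hc => h ⟨a, by simpa [encodeApps, encodeRun] using ha, ?_⟩
    rwa [decodeSeq_map_base] at hc

end encode

end BPE

theorem BPE.concat_valid_iff_no_crossing_merge_general {σ τ : Type*} [DecidableEq τ]
    (B : BPE σ τ) (S₁ S₂ : List σ) :
    B.Valid (B.encode S₁ ++ B.encode S₂) ↔
      ¬ B.MergeCrossesInRun (S₁ ++ S₂) S₁.length := by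
  rw [Valid, decodeSeq_append, decodeSeq_encode_s1, decodeSeq_encode_s1]
  exact B.encode_append_eq_iff S₁ S₂

/-- Let `S₁`, `S₂` be byte strings with `T₁ = encode S₁`, `T₂ = encode S₂`.
Then `T₁ ++ T₂` is a valid token sequence if and only if no merge applied
during the run of `encode` on `S₁ ++ S₂` crosses position `|S₁|`. -/
theorem BPE.concat_valid_iff_no_crossing_merge {σ τ : Type*} [DecidableEq τ]
    (B : BPE σ τ) (hNF : B.NormalForm) (S₁ S₂ : List σ) :
    B.Valid (B.encode S₁ ++ B.encode S₂) ↔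
      ¬ B.MergeCrossesInRun (S₁ ++ S₂) S₁.length :=
  BPE.concat_valid_iff_no_crossing_merge_general B S₁ S₂
end

section
/- For every byte string S, decode(encode(S)) = S; consequently, encode(S) is a valid token sequence, i.e. encode(decode(encode(S))) = encode(S). -/
namespace BPE

variable {σ τ : Type*} (B : BPE σ τ)

lemma dec_merge_of_mem_indexed_merges {m : ℕ × τ × τ × τ}
    (hm : m ∈ B.merges.zipIdx.map Prod.swap) :
    B.dec m.2.2.2 = B.dec m.2.1 ++ B.dec m.2.2.1 := by
  obtain ⟨x, hx, rfl⟩ := List.mem_map.mp hm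
  exact B.dec_merge x.1 (List.fst_mem_of_mem_zipIdx hx)

variable {B} [DecidableEq τ]

lemma decodeSeq_of_replaceLeftmost_eq_some {l r n : τ} (hd : B.dec n = B.dec l ++ B.dec r) :
    ∀ {T T' : List τ} {p : ℕ}, B.replaceLeftmost l r n T = some (p, T') →
      B.decodeSeq T' = B.decodeSeq T
  | [], _, _, h | [_], _, _, h => by simp [replaceLeftmost] at h
  | t :: u :: rest, T', _, h => by
    rw [replaceLeftmost] at h
    split_ifs at h with hlr
    · obtain ⟨rfl, rfl⟩ := hlr
      obtain rfl := (Prod.mk.inj (Option.some.inj h)).2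
      simp [hd]
    · obtain ⟨⟨p₀, T₀⟩, hrec, hT⟩ := Option.map_eq_some_iff.mp h
      obtain rfl := (Prod.mk.inj hT).2
      rw [decodeSeq_cons, decodeSeq_cons, decodeSeq_of_replaceLeftmost_eq_some hd hrec,
        decodeSeq_cons]

lemma decodeSeq_runMerge_fst {l r n : τ} (hd : B.dec n = B.dec l ++ B.dec r) :
    ∀ (fuel : ℕ) (T : List τ), B.decodeSeq (B.runMerge l r n fuel T).1 = B.decodeSeq T
  | 0, _ => rfl
  | fuel + 1, T => by
    rw [runMerge]
    rcases h : B.replaceLeftmost l r n T with _ | ⟨p, T'⟩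
    · rfl
    · rw [decodeSeq_runMerge_fst hd fuel T', decodeSeq_of_replaceLeftmost_eq_some hd h]

lemma decodeSeq_encodeRunAux_fst :
    ∀ (ms : List (ℕ × τ × τ × τ)), (∀ m ∈ ms, B.dec m.2.2.2 = B.dec m.2.1 ++ B.dec m.2.2.1) →
      ∀ T : List τ, B.decodeSeq (B.encodeRunAux ms T).1 = B.decodeSeq T
  | [], _, _ => rfl
  | (_, l, r, n) :: ms, hms, T => by
    rw [encodeRunAux,
      decodeSeq_encodeRunAux_fst ms (fun m hm => hms m (List.mem_cons_of_mem _ hm)),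
      decodeSeq_runMerge_fst (hms _ List.mem_cons_self)]

end BPE

theorem BPE.decodeSeq_encode_general {σ τ : Type*} [DecidableEq τ]
    (B : BPE σ τ) (S : List σ) :
    B.decodeSeq (B.encode S) = S ∧
      B.encode (B.decodeSeq (B.encode S)) = B.encode S := by
  have hdecode : B.decodeSeq (B.encode S) = S := by
    rw [encode, encodeRun,
      decodeSeq_encodeRunAux_fst _ (fun _ => B.dec_merge_of_mem_indexed_merges),
      decodeSeq_map_base]
  exact ⟨hdecode, by rw [hdecode]⟩

/-- For every byte string `S`, `decode (encode S) = S`; consequently,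
`encode S` is a valid token sequence, i.e.
`encode (decode (encode S)) = encode S`. -/
theorem BPE.decodeSeq_encode {σ τ : Type*} [DecidableEq τ]
    (B : BPE σ τ) (hNF : B.NormalForm) (S : List σ) :
    B.decodeSeq (B.encode S) = S ∧
      B.encode (B.decodeSeq (B.encode S)) = B.encode S :=
  BPE.decodeSeq_encode_general B S
end
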